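/- Let n ≥ 1, let k ≥ 2 be even, let r ≥ 0, and let S = (Fin (k+1)) → (Fin n → ZMod 2). Fix any x ∈ S and let D be the single-query test that accepts a state y ∈ S exactly when the XOR of all k+1 blocks of y equals the XOR of all k+1 blocks of x. Then: (a) for every tuple of round functions f₁, …, f_r : (Fin n → ZMod 2) → (Fin n → ZMod 2), the output of the r-round n:kn-UFN2 on x is accepted by D; and (b) for a uniformly random permutation π of S, D accepts π(x) with probability exactly 1/2^n. Hence the test distinguishes the r-round n:kn-UFN2 (with any, in particular random, round functions) from a uniformly random permutation with advantage exactly 1 − 1/2^n. -/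

import Mathlib

/-- An `n`-bit block, i.e. a bit string of length `n`. -/
abbrev Blk (n : ℕ) : Type := Fin n → ZMod 2

/-- The state of a `(k+1)`-block Feistel network: `k+1` blocks of `n` bits each. -/
abbrev St (n k : ℕ) : Type := Fin (k + 1) → Blk n

/-- One round of the `n:kn`-UFN2 with round function `f : Blk n → Blk n`:
`(L₁, …, L_k, R) ↦ (R, L₁ ⊕ f R, …, L_k ⊕ f R)`.
State coordinates `0, …, k-1` are `L₁, …, L_k` and coordinate `k` is `R`. -/
def ufn2Round {n k : ℕ} (f : Blk n → Blk n) (s : St n k) : St n k :=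
  fun i =>
    if h : (i : ℕ) = 0 then s (Fin.last k)
    else s ⟨(i : ℕ) - 1, by have := i.isLt; omega⟩ + f (s (Fin.last k))

/-- The `r`-round `n:kn`-UFN2 with round functions `f 0, …, f (r-1)`, applied with `f 0`
first. -/
def ufn2Run {n k : ℕ} : (r : ℕ) → (Fin r → (Blk n → Blk n)) → St n k → St n k
  | 0, _, s => s
  | r + 1, f, s => ufn2Round (f (Fin.last r)) (ufn2Run r (fun i => f i.castSucc) s)

/-!
A round moves `R` and adds `f R` to each of the `k` left blocks, so for even `k` the XOR of all
blocks is invariant. Under a uniformly random permutation, `π x` is uniform on the states, and the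
XOR of the blocks of a uniform state is uniform on `Blk n`, so it hits any fixed value with
probability `1 / 2^n`.
-/

open Finset

section FiberCounting

variable {α β : Type*} [Fintype α] [DecidableEq β]

lemma card_filter_mem_of_card_fiber_eq {g : α → β} {m : ℕ} (hg : ∀ b, #{a | g a = b} = m)
    (t : Finset β) : #{a | g a ∈ t} = #t * m := by
  rw [← sum_card_fiberwise_eq_card_filter, sum_congr rfl fun b _ => hg b, sum_const, smul_eq_mul]

lemma card_filter_mem_div_card_of_card_fiber_eq [Fintype β] {g : α → β} {m : ℕ}
    (hg : ∀ b, #{a | g a = b} = m) (hm : m ≠ 0) (t : Finset β) :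
    (#{a | g a ∈ t} : ℝ) / Fintype.card α = #t / Fintype.card β := by
  have hα : Fintype.card α = Fintype.card β * m := by
    simpa using card_filter_mem_of_card_fiber_eq hg univ
  rw [card_filter_mem_of_card_fiber_eq hg, hα]
  push_cast
  exact mul_div_mul_right _ _ (by exact_mod_cast hm)

end FiberCounting

lemma Equiv.Perm.card_filter_apply_eq {S : Type*} [Fintype S] [DecidableEq S] (x y : S) :
    #{π : Perm S | π x = y} = #{π : Perm S | π x = x} := by
  symm
  refine card_equiv (Equiv.mulLeft (swap x y)) fun π => ?_
  simp [swap_apply_eq_iff]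

lemma Equiv.Perm.card_filter_apply_div_card {S : Type*} [Fintype S] [DecidableEq S] (x : S)
    (P : S → Prop) [DecidablePred P] :
    (#{π : Perm S | P (π x)} : ℝ) / Fintype.card (Perm S) = #{y | P y} / Fintype.card S := by
  simpa using card_filter_mem_div_card_of_card_fiber_eq (card_filter_apply_eq x)
    (card_pos.mpr ⟨1, by simp⟩).ne' {y | P y}

section SumFibers

variable {ι G : Type*} [Fintype ι] [DecidableEq ι] [Nonempty ι] [AddCommGroup G] [Fintype G]
  [DecidableEq G]

lemma card_filter_sum_eq (c : G) :
    #{y : ι → G | ∑ i, y i = c} = #{y : ι → G | ∑ i, y i = 0} := by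
  let sumHom : (ι → G) →+ G := ∑ i, Pi.evalAddMonoidHom (fun _ => G) i
  have hsurj : Function.Surjective sumHom := fun c =>
    ⟨Pi.single (Classical.arbitrary ι) c, by simp [sumHom]⟩
  simpa [sumHom] using AddMonoidHom.card_fiber_eq_of_mem_range sumHom (hsurj c) (hsurj 0)

lemma card_filter_sum_div_card (c : G) :
    (#{y : ι → G | ∑ i, y i = c} : ℝ) / Fintype.card (ι → G) = 1 / Fintype.card G := by
  simpa using card_filter_mem_div_card_of_card_fiber_eq card_filter_sum_eq
    (card_pos.mpr ⟨0, by simp⟩).ne' {c}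

end SumFibers

lemma nsmul_eq_zero_of_even {G : Type*} [AddCommGroup G] [Module (ZMod 2) G] {k : ℕ}
    (hk : Even k) (v : G) : k • v = 0 := by
  obtain ⟨m, rfl⟩ := hk
  rw [← two_mul, mul_comm, mul_nsmul, ZModModule.char_nsmul_eq_zero]

section UFN2

variable {n k : ℕ}

@[simp]
lemma ufn2Round_zero (f : Blk n → Blk n) (s : St n k) : ufn2Round f s 0 = s (Fin.last k) := rfl

@[simp]
lemma ufn2Round_succ (f : Blk n → Blk n) (s : St n k) (i : Fin k) :
    ufn2Round f s i.succ = s i.castSucc + f (s (Fin.last k)) :=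
  dif_neg (Nat.succ_ne_zero i)

lemma sum_ufn2Round (hk : Even k) (f : Blk n → Blk n) (s : St n k) :
    ∑ i, ufn2Round f s i = ∑ i, s i := by
  rw [Fin.sum_univ_succ, Fin.sum_univ_castSucc (f := s)]
  simp [sum_add_distrib, nsmul_eq_zero_of_even hk, add_comm]

lemma sum_ufn2Run (hk : Even k) :
    ∀ (r : ℕ) (f : Fin r → Blk n → Blk n) (s : St n k), ∑ i, ufn2Run r f s i = ∑ i, s i
  | 0, _, _ => rfl
  | r + 1, f, s => by rw [ufn2Run, sum_ufn2Round hk, sum_ufn2Run hk r]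

end UFN2

theorem ufn2_even_not_pseudorandom_general (n k r : ℕ) (hke : Even k)
    (x : St n k) :
    (∀ f : Fin r → (Blk n → Blk n),
      ∑ i : Fin (k + 1), ufn2Run r f x i = ∑ i : Fin (k + 1), x i) ∧
    ((Finset.univ.filter (fun π : Equiv.Perm (St n k) =>
        ∑ i : Fin (k + 1), π x i = ∑ i : Fin (k + 1), x i)).card : ℝ) /
      (Fintype.card (Equiv.Perm (St n k)) : ℝ) = 1 / (2 : ℝ) ^ n := by
  refine ⟨fun f => sum_ufn2Run hke r f x, ?_⟩
  rw [Equiv.Perm.card_filter_apply_div_card x (fun y => ∑ i, y i = ∑ i, x i),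
    card_filter_sum_div_card]
  simp

/-- **Theorem 4.1.** Let `k ≥ 2` be even and fix a state `x`.  Consider the
single-query test that accepts a state `y` exactly when the XOR of all `k+1` blocks of `y`
equals the XOR of all `k+1` blocks of `x`.  Then (a) for every tuple of round functions, the
output of the `r`-round `n:kn`-UFN2 on `x` is accepted; and (b) for a uniformly random
permutation `π` of the state space, `π x` is accepted with probability exactly `1/2^n`.
Hence the test distinguishes the `r`-round `n:kn`-UFN2 from a uniformly random permutation
with advantage exactly `1 − 1/2^n`. -/
theorem ufn2_even_not_pseudorandom (n k r : ℕ) (hn : 1 ≤ n) (hk : 2 ≤ k) (hke : Even k)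
    (x : St n k) :
    (∀ f : Fin r → (Blk n → Blk n),
      ∑ i : Fin (k + 1), ufn2Run r f x i = ∑ i : Fin (k + 1), x i) ∧
    ((Finset.univ.filter (fun π : Equiv.Perm (St n k) =>
        ∑ i : Fin (k + 1), π x i = ∑ i : Fin (k + 1), x i)).card : ℝ) /
      (Fintype.card (Equiv.Perm (St n k)) : ℝ) = 1 / (2 : ℝ) ^ n :=
  ufn2_even_not_pseudorandom_general n k r hke x
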